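/- Fix ε ≥ 0, δ ≥ 0, and any finite α ≥ 1. Let M be any randomized mechanism that takes a MobileVaccClinic instance with outliers on the Euclidean line ℝ (with public locations C ⊆ ℝ, budget k, and requirement ρ, and private people with their travel sets) and outputs a random set F ⊆ C with |F| ≤ k, and suppose M is (ε, δ)-differentially private with respect to instances differing in exactly one person together with their travel set. If there is p such that on every instance M outputs a set F whose radius is at most α · R* with probability at least p (where R* is the optimal radius of the instance), then p ≤ (e^ε + δ)/(1 + e^ε). In particular, when δ < 1, no (ε, δ)-differentially private algorithm — efficient or not — achieves any finite multiplicative approximation for MobileVaccClinic with outliers with probability tending to 1, even on the Euclidean line. -/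

import Mathlib

open scoped ENNReal

/-!
STATEMENT 10: Fix `ε, δ ≥ 0` and a finite approximation factor `α ≥ 1`. Let `M`
be any randomized mechanism taking a MobileVaccClinic instance with outliers on
the Euclidean line (public locations `C ⊆ ℝ`, budget `k`, requirement `ρ`;
private population given as a multiset of travel sets) to a distribution over
facility sets `F ⊆ ℝ`, and suppose `M` is `(ε, δ)`-differentially private with
respect to populations differing in exactly one person (with their travel set).
If on every instance `M` outputs, with probability at least `p`, a set `F ⊆ C`
with `|F| ≤ k` whose radius is at most `α · R*` (where `R*` is the optimal
radius of the instance), then `p ≤ (e^ε + δ) / (1 + e^ε)`. Hence no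
`(ε, δ)`-differentially private algorithm achieves any finite multiplicative
approximation with probability tending to `1`, even on the Euclidean line.
-/

attribute [local instance] Classical.propDecidable

noncomputable section

/-- `d(A, B) = min_{j ∈ A, j' ∈ B} d(j, j')` for finite (nonempty) sets. -/
def setDist {C : Type*} [MetricSpace C] (A B : Finset C) : ℝ :=
  sInf {r : ℝ | ∃ j ∈ A, ∃ j' ∈ B, r = dist j j'}

/-- Neighboring populations: they differ in exactly one person together with
their travel set. -/
def NeighborP (P P' : Multiset (Finset ℝ)) : Prop :=
  ∃ T : Finset ℝ, P' = T ::ₘ P ∨ P = T ::ₘ P'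

/-- The radius of a facility set `F` on population `P` with requirement `ρ`:
the smallest `R` such that at least `⌊ρ|P|⌋` people `p` have `d(S_p, F) ≤ R`. -/
def mvcRadius (ρ : ℝ) (P : Multiset (Finset ℝ)) (F : Finset ℝ) : ℝ :=
  sInf {R : ℝ |
    ⌊ρ * (Multiset.card P : ℝ)⌋₊ ≤ Multiset.card (P.filter fun T => setDist T F ≤ R)}

/-- The optimal radius `R*`: the minimum radius over all nonempty `F ⊆ C` with
`|F| ≤ k`. -/
def mvcRstar (C : Finset ℝ) (k : ℕ) (ρ : ℝ) (P : Multiset (Finset ℝ)) : ℝ :=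
  sInf {R : ℝ | ∃ F : Finset ℝ, F.Nonempty ∧ F ⊆ C ∧ F.card ≤ k ∧
    ⌊ρ * (Multiset.card P : ℝ)⌋₊ ≤ Multiset.card (P.filter fun T => setDist T F ≤ R)}

/-!
If an `(ε, δ)`-private mechanism succeeds with probability `≥ p` on neighbouring inputs
`D, D'` whose success events `A, B` are disjoint, then
`p ≤ Pr_D[A] ≤ e^ε Pr_D'[A] + δ ≤ e^ε (1 - p) + δ`, i.e. `p ≤ (e^ε + δ) / (1 + e^ε)`.

Such inputs exist on the line for every `α`: take sites `{0, L}` with `L > α`, `L ≥ 1`,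
budget `1`, `ρ = 1`. A single person with travel set `{0, L - 1}` has `R* = 0`, so the
only `α`-approximate solution is `{0}`. Adding a person at `L` makes `R* = 1` (open `L`),
while `{0}` now has radius `L > α`.
-/

lemma PMF.toOuterMeasure_add_le_one_of_disjoint {X : Type*} (μ : PMF X) {A B : Set X}
    (hAB : Disjoint A B) : μ.toOuterMeasure A + μ.toOuterMeasure B ≤ 1 := by
  rw [μ.toOuterMeasure_apply, μ.toOuterMeasure_apply, ← ENNReal.tsum_add,
    ← Set.indicator_union_of_disjoint hAB, ← μ.toOuterMeasure_apply,
    ← (μ.toOuterMeasure_apply_eq_one_iff Set.univ).2 (Set.subset_univ _)]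
  exact μ.toOuterMeasure.mono (Set.subset_univ _)

lemma ENNReal.le_div_one_add_of_le_mul_one_sub {p e d : ℝ≥0∞} (he : e ≠ ⊤) (hp : p ≤ 1)
    (h : p ≤ e * (1 - p) + d) : p ≤ (e + d) / (1 + e) := by
  rw [ENNReal.le_div_iff_mul_le (Or.inl (by simp)) (Or.inl (by simp [he]))]
  calc p * (1 + e) = p + e * p := by ring
    _ ≤ e * (1 - p) + d + e * p := by gcongr
    _ = e * (1 - p + p) + d := by ring
    _ = e + d := by rw [tsub_add_cancel_of_le hp, mul_one]

lemma PMF.le_div_one_add_of_disjoint {X : Type*} (μ ν : PMF X) {A B : Set X}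
    (hAB : Disjoint A B) {p e d : ℝ≥0∞} (he : e ≠ ⊤)
    (hμν : μ.toOuterMeasure A ≤ e * ν.toOuterMeasure A + d)
    (hμ : p ≤ μ.toOuterMeasure A) (hν : p ≤ ν.toOuterMeasure B) :
    p ≤ (e + d) / (1 + e) := by
  have hsum := ν.toOuterMeasure_add_le_one_of_disjoint hAB
  have hνB : ν.toOuterMeasure B ≠ ⊤ :=
    ne_top_of_le_ne_top ENNReal.one_ne_top (le_of_add_le_right hsum)
  have hνA : ν.toOuterMeasure A ≤ 1 - p :=
    (ENNReal.le_sub_of_add_le_right hνB hsum).trans (tsub_le_tsub_left hν 1)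
  refine ENNReal.le_div_one_add_of_le_mul_one_sub he (hν.trans (le_of_add_le_right hsum)) ?_
  calc p ≤ μ.toOuterMeasure A := hμ
    _ ≤ e * ν.toOuterMeasure A + d := hμν
    _ ≤ e * (1 - p) + d := by gcongr

lemma floor_one_mul_card_le_card_filter_iff {X : Type*} (P : Multiset X) (q : X → Prop)
    [DecidablePred q] :
    ⌊(1 : ℝ) * (Multiset.card P : ℝ)⌋₊ ≤ Multiset.card (P.filter q) ↔ ∀ T ∈ P, q T := by
  rw [one_mul, Nat.floor_natCast, ← Multiset.filter_eq_self]
  exact ⟨Multiset.eq_of_le_of_card_le (Multiset.filter_le q P), fun h => h.symm ▸ le_rfl⟩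

lemma setDist_nonneg {X : Type*} [MetricSpace X] (A B : Finset X) : 0 ≤ setDist A B :=
  Real.sInf_nonneg fun _ ⟨_, _, _, _, hr⟩ => hr ▸ dist_nonneg

lemma setDist_singleton_singleton {X : Type*} [MetricSpace X] (a c : X) :
    setDist {a} {c} = dist a c := by
  simp [setDist]

lemma setDist_pair_singleton {X : Type*} [MetricSpace X] [DecidableEq X] (a b c : X) :
    setDist {a, b} {c} = min (dist a c) (dist b c) := by
  have h : {r : ℝ | ∃ j ∈ ({a, b} : Finset X), ∃ j' ∈ ({c} : Finset X), r = dist j j'} =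
      {dist a c, dist b c} := by
    ext r; simp
  rw [setDist, h, csInf_pair]

lemma mvcRadius_one_eq {P : Multiset (Finset ℝ)} {F : Finset ℝ} {r : ℝ}
    (hle : ∀ T ∈ P, setDist T F ≤ r) (hmem : ∃ T ∈ P, setDist T F = r) :
    mvcRadius 1 P F = r := by
  unfold mvcRadius
  simp_rw [floor_one_mul_card_le_card_filter_iff]
  refine (congrArg sInf (Set.ext fun R => ?_)).trans (csInf_Ici (a := r))
  obtain ⟨T₀, hT₀, rfl⟩ := hmem
  exact ⟨fun h => h T₀ hT₀, fun h T hT => (hle T hT).trans h⟩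

lemma forall_setDist_le_iff_mvcRadius_one_le {P : Multiset (Finset ℝ)} (hP : P ≠ 0)
    (F : Finset ℝ) (R : ℝ) : (∀ T ∈ P, setDist T F ≤ R) ↔ mvcRadius 1 P F ≤ R := by
  obtain ⟨T₀, hT₀, hmax⟩ := Multiset.exists_max_image (setDist · F) hP
  rw [mvcRadius_one_eq hmax ⟨T₀, hT₀, rfl⟩]
  exact ⟨fun h => h T₀ hT₀, fun h T hT => (hmax T hT).trans h⟩

lemma mvcRstar_one_eq {C : Finset ℝ} {k : ℕ} {P : Multiset (Finset ℝ)} (hP : P ≠ 0)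
    {F₀ : Finset ℝ} (hF₀ : F₀.Nonempty ∧ F₀ ⊆ C ∧ F₀.card ≤ k)
    (hmin : ∀ F : Finset ℝ, F.Nonempty → F ⊆ C → F.card ≤ k →
      mvcRadius 1 P F₀ ≤ mvcRadius 1 P F) :
    mvcRstar C k 1 P = mvcRadius 1 P F₀ := by
  unfold mvcRstar
  simp_rw [floor_one_mul_card_le_card_filter_iff, forall_setDist_le_iff_mvcRadius_one_le hP]
  refine (congrArg sInf (Set.ext fun R => ?_)).trans (csInf_Ici (a := mvcRadius 1 P F₀))
  constructor
  · rintro ⟨F, hF, hFC, hFk, hR⟩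
    exact (hmin F hF hFC hFk).trans hR
  · exact fun hR => ⟨F₀, hF₀.1, hF₀.2.1, hF₀.2.2, hR⟩

lemma eq_singleton_of_subset_pair {X : Type*} [DecidableEq X] {a b : X} {F : Finset X}
    (hF : F.Nonempty) (hFab : F ⊆ {a, b}) (hcard : F.card ≤ 1) : F = {a} ∨ F = {b} := by
  obtain ⟨x, rfl⟩ := Finset.card_eq_one.1 (le_antisymm hcard hF.card_pos)
  simpa using hFab

def approxSolutions (C : Finset ℝ) (k : ℕ) (ρ α : ℝ) (P : Multiset (Finset ℝ)) :
    Set (Finset ℝ) :=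
  {F | F.Nonempty ∧ F ⊆ C ∧ F.card ≤ k ∧ mvcRadius ρ P F ≤ α * mvcRstar C k ρ P}

section TwoPointInstance

/-! Sites `{0, L}`; `near = {0, L - 1}` and `far = {L}` are travel sets. -/

variable {L : ℝ}

lemma setDist_near_zero : setDist {0, L - 1} {0} = 0 := by
  rw [setDist_pair_singleton, dist_self]
  exact min_eq_left dist_nonneg

lemma setDist_near_far (hL : 1 ≤ L) : setDist {0, L - 1} {L} = 1 := by
  rw [setDist_pair_singleton]
  simp [Real.dist_eq, abs_of_pos (show 0 < L by linarith), hL]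

lemma mvcRadius_near (F : Finset ℝ) :
    mvcRadius 1 {{0, L - 1}} F = setDist {0, L - 1} F :=
  mvcRadius_one_eq (by simp) (by simp)

lemma mvcRadius_nearFar_zero (hL : 1 ≤ L) :
    mvcRadius 1 ({L} ::ₘ {{0, L - 1}}) {0} = L := by
  have hfar : setDist {L} {0} = L := by
    rw [setDist_singleton_singleton, Real.dist_eq, sub_zero, abs_of_pos (by linarith)]
  refine mvcRadius_one_eq ?_ ⟨{L}, by simp, hfar⟩
  simp only [Multiset.mem_cons, Multiset.mem_singleton, forall_eq_or_imp, forall_eq, hfar,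
    setDist_near_zero]
  exact ⟨le_rfl, by linarith⟩

lemma mvcRadius_nearFar_far (hL : 1 ≤ L) :
    mvcRadius 1 ({L} ::ₘ {{0, L - 1}}) {L} = 1 := by
  refine mvcRadius_one_eq ?_ ⟨{0, L - 1}, by simp, setDist_near_far hL⟩
  simp [setDist_near_far hL, setDist_singleton_singleton]

lemma mvcRstar_near : mvcRstar {0, L} 1 1 {{0, L - 1}} = 0 := by
  refine (mvcRstar_one_eq (F₀ := {0}) (by simp) (by simp) fun F _ _ _ => ?_).trans ?_
  · rw [mvcRadius_near, mvcRadius_near, setDist_near_zero]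
    exact setDist_nonneg _ _
  · rw [mvcRadius_near, setDist_near_zero]

lemma mvcRstar_nearFar (hL : 1 ≤ L) : mvcRstar {0, L} 1 1 ({L} ::ₘ {{0, L - 1}}) = 1 := by
  refine (mvcRstar_one_eq (F₀ := {L}) (by simp) (by simp) fun F hF hFC hFk => ?_).trans
    (mvcRadius_nearFar_far hL)
  rw [mvcRadius_nearFar_far hL]
  rcases eq_singleton_of_subset_pair hF hFC hFk with rfl | rfl
  · rw [mvcRadius_nearFar_zero hL]
    exact hL
  · rw [mvcRadius_nearFar_far hL]

lemma approxSolutions_near_subset (α : ℝ) (hL : 1 ≤ L) :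
    approxSolutions {0, L} 1 1 α {{0, L - 1}} ⊆ {{0}} := by
  rintro F ⟨hF, hFC, hFk, hrad⟩
  rw [mvcRstar_near, mul_zero, mvcRadius_near] at hrad
  rcases eq_singleton_of_subset_pair hF hFC hFk with rfl | rfl
  · rfl
  · rw [setDist_near_far hL] at hrad
    norm_num at hrad

lemma zero_notMem_approxSolutions_nearFar {α : ℝ} (hL : 1 ≤ L) (hαL : α < L) :
    {0} ∉ approxSolutions {0, L} 1 1 α ({L} ::ₘ {{0, L - 1}}) := by
  rintro ⟨-, -, -, hrad⟩
  rw [mvcRadius_nearFar_zero hL, mvcRstar_nearFar hL, mul_one] at hrad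
  exact hαL.not_ge hrad

lemma disjoint_approxSolutions_near_nearFar {α : ℝ} (hL : 1 ≤ L) (hαL : α < L) :
    Disjoint (approxSolutions {0, L} 1 1 α {{0, L - 1}})
      (approxSolutions {0, L} 1 1 α ({L} ::ₘ {{0, L - 1}})) :=
  Set.disjoint_left.2 fun _ hF hF' =>
    zero_notMem_approxSolutions_nearFar hL hαL (approxSolutions_near_subset α hL hF ▸ hF')

end TwoPointInstance

theorem stmt10_general (ε δ : ℝ) (α : ℝ)
    (M : Finset ℝ → ℕ → ℝ → Multiset (Finset ℝ) → PMF (Finset ℝ))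
    (hDP : ∀ (C : Finset ℝ) (k : ℕ) (ρ : ℝ) (P P' : Multiset (Finset ℝ)),
      NeighborP P P' → ∀ E : Set (Finset ℝ),
        (M C k ρ P).toOuterMeasure E ≤
          ENNReal.ofReal (Real.exp ε) * (M C k ρ P').toOuterMeasure E +
            ENNReal.ofReal δ)
    (p : ℝ≥0∞)
    (hutil : ∀ (C : Finset ℝ) (k : ℕ) (ρ : ℝ) (P : Multiset (Finset ℝ)),
      C.Nonempty → 1 ≤ k → 0 < ρ → ρ ≤ 1 →
      p ≤ (M C k ρ P).toOuterMeasure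
        {F : Finset ℝ | F.Nonempty ∧ F ⊆ C ∧ F.card ≤ k ∧
          mvcRadius ρ P F ≤ α * mvcRstar C k ρ P}) :
    p ≤ (ENNReal.ofReal (Real.exp ε) + ENNReal.ofReal δ) /
      (1 + ENNReal.ofReal (Real.exp ε)) := by
  set L := |α| + 1
  have hL : 1 ≤ L := le_add_of_nonneg_left (abs_nonneg α)
  have hαL : α < L := (le_abs_self α).trans_lt (lt_add_one _)
  have hC : ({0, L} : Finset ℝ).Nonempty := by simp
  exact PMF.le_div_one_add_of_disjoint _ _ (disjoint_approxSolutions_near_nearFar hL hαL)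
    ENNReal.ofReal_ne_top (hDP _ _ _ _ _ ⟨{L}, Or.inl rfl⟩ _)
    (hutil _ _ _ _ hC le_rfl one_pos le_rfl) (hutil _ _ _ _ hC le_rfl one_pos le_rfl)

theorem stmt10 (ε δ : ℝ) (hε : 0 ≤ ε) (hδ : 0 ≤ δ) (α : ℝ) (hα : 1 ≤ α)
    (M : Finset ℝ → ℕ → ℝ → Multiset (Finset ℝ) → PMF (Finset ℝ))
    (hDP : ∀ (C : Finset ℝ) (k : ℕ) (ρ : ℝ) (P P' : Multiset (Finset ℝ)),
      NeighborP P P' → ∀ E : Set (Finset ℝ),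
        (M C k ρ P).toOuterMeasure E ≤
          ENNReal.ofReal (Real.exp ε) * (M C k ρ P').toOuterMeasure E +
            ENNReal.ofReal δ)
    (p : ℝ≥0∞)
    (hutil : ∀ (C : Finset ℝ) (k : ℕ) (ρ : ℝ) (P : Multiset (Finset ℝ)),
      C.Nonempty → 1 ≤ k → 0 < ρ → ρ ≤ 1 →
      p ≤ (M C k ρ P).toOuterMeasure
        {F : Finset ℝ | F.Nonempty ∧ F ⊆ C ∧ F.card ≤ k ∧
          mvcRadius ρ P F ≤ α * mvcRstar C k ρ P}) :
    p ≤ (ENNReal.ofReal (Real.exp ε) + ENNReal.ofReal δ) /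
      (1 + ENNReal.ofReal (Real.exp ε)) :=
  stmt10_general ε δ α M hDP p hutil
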